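/- Let R = ℤ[s, s⁻¹, t, t⁻¹] and let d₁ : R⁴ → R be the R-linear map with d₁(b₁) = d₁(b₂) = 1 − s and d₁(b₃) = d₁(b₄) = 1 − t. Then ker d₁ is the free R-module with basis {b₁ − b₂, (1 − t)·b₂ + (s − 1)·b₃, b₃ − b₄}. -/

import Mathlib

/-!
Write `u = 1 - s` and `v = 1 - t`. A vector `x` in the kernel satisfies
`(x₁ + x₂) u + (x₃ + x₄) v = 0`. The specialisation `t ↦ 1` is a ring endomorphism of `R` fixing
`s`, and `a ≡ a(s, 1) mod v`; so `v ∣ a u` forces `a(s, 1) u = 0`, hence `a(s, 1) = 0` and `v ∣ a`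
(`R` is a domain). Thus `x₁ + x₂ = c v` and `x₃ + x₄ = -c u`, which exhibits `x` as
`x₁ (b₁ - b₂) + c (v b₂ - u b₃) - x₄ (b₃ - b₄)`. Linear independence is read off the coordinates
of `b₁`, `b₂`, `b₄`, since `v` is a non-zero-divisor.
-/
/-- `R = ℤ[s,s⁻¹,t,t⁻¹]`, the group ring of the free abelian group with basis `{s, t}`. -/
noncomputable abbrev GroupRingZ2 : Type := AddMonoidAlgebra ℤ (ℤ × ℤ)

noncomputable def sGen : GroupRingZ2 := AddMonoidAlgebra.single (1, 0) 1

noncomputable def tGen : GroupRingZ2 := AddMonoidAlgebra.single (0, 1) 1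

noncomputable def rowMap {R : Type*} [CommRing R] {ι : Type*} [Fintype ι] (c : ι → R) :
    (ι → R) →ₗ[R] R where
  toFun x := ∑ k, x k * c k
  map_add' x y := by simp [add_mul, Finset.sum_add_distrib]
  map_smul' r x := by simp [Finset.mul_sum, mul_assoc]

/-- `bᵢ` is `Pi.single (i - 1) 1`. -/
noncomputable def kerBasisF4 : Fin 3 → (Fin 4 → GroupRingZ2) :=
  ![(Pi.single 0 1 : Fin 4 → GroupRingZ2) - (Pi.single 1 1 : Fin 4 → GroupRingZ2),
    (1 - tGen) • (Pi.single 1 1 : Fin 4 → GroupRingZ2) +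
      (sGen - 1) • (Pi.single 2 1 : Fin 4 → GroupRingZ2),
    (Pi.single 2 1 : Fin 4 → GroupRingZ2) - (Pi.single 3 1 : Fin 4 → GroupRingZ2)]

open AddMonoidAlgebra
open scoped nonZeroDivisors

section RowMap

variable {R : Type*} [CommRing R]

lemma rowMap_apply_fin_four (c x : Fin 4 → R) :
    rowMap c x = x 0 * c 0 + x 1 * c 1 + x 2 * c 2 + x 3 * c 3 :=
  Fin.sum_univ_four fun k => x k * c k

noncomputable def rowMapKerBasis (u v : R) : Fin 3 → Fin 4 → R :=
  ![Pi.single 0 1 - Pi.single 1 1, v • Pi.single 1 1 - u • Pi.single 2 1,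
    Pi.single 2 1 - Pi.single 3 1]

variable {u v : R}

lemma rowMap_rowMapKerBasis (i : Fin 3) :
    rowMap ![u, u, v, v] (rowMapKerBasis u v i) = 0 := by
  rw [rowMap_apply_fin_four]
  fin_cases i <;> simp [rowMapKerBasis, mul_comm]

lemma rowMapKerBasis_combination (a b c : R) :
    a • rowMapKerBasis u v 0 + b • rowMapKerBasis u v 1 + c • rowMapKerBasis u v 2 =
      ![a, v * b - a, c - u * b, -c] := by
  funext j
  fin_cases j <;> simp [rowMapKerBasis, mul_comm, sub_eq_add_neg, add_comm]

lemma mem_span_rowMapKerBasis (hv : v ∈ R⁰) (huv : ∀ a, v ∣ a * u → v ∣ a)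
    {x : Fin 4 → R} (hx : rowMap ![u, u, v, v] x = 0) :
    x ∈ Submodule.span R (Set.range (rowMapKerBasis u v)) := by
  rw [rowMap_apply_fin_four] at hx
  simp only [Matrix.cons_val] at hx
  obtain ⟨c, hc⟩ : v ∣ x 0 + x 1 := huv _ ⟨-(x 2 + x 3), by linear_combination hx⟩
  have hc' : x 2 + x 3 = -(c * u) := by
    rw [← add_eq_zero_iff_eq_neg]
    exact mem_nonZeroDivisors_iff_right.mp hv _ (by linear_combination hx - u * hc)
  have hx_eq : x = ![x 0, v * c - x 0, -x 3 - u * c, - -x 3] := by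
    funext j
    fin_cases j
    · rfl
    · show x 1 = v * c - x 0
      linear_combination hc
    · show x 2 = -x 3 - u * c
      linear_combination hc'
    · exact (neg_neg _).symm
  rw [hx_eq, ← rowMapKerBasis_combination]
  refine add_mem (add_mem ?_ ?_) ?_ <;>
    exact Submodule.smul_mem _ _ (Submodule.subset_span ⟨_, rfl⟩)

lemma ker_rowMap_eq_span (hv : v ∈ R⁰) (huv : ∀ a, v ∣ a * u → v ∣ a) :
    LinearMap.ker (rowMap ![u, u, v, v]) =
      Submodule.span R (Set.range (rowMapKerBasis u v)) := by
  refine le_antisymm (fun x hx => mem_span_rowMapKerBasis hv huv hx) ?_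
  rw [Submodule.span_le]
  rintro _ ⟨i, rfl⟩
  exact rowMap_rowMapKerBasis i

lemma linearIndependent_rowMapKerBasis (hv : v ∈ R⁰) :
    LinearIndependent R (rowMapKerBasis u v) := by
  rw [Fintype.linearIndependent_iff]
  intro g hg
  rw [Fin.sum_univ_three, rowMapKerBasis_combination] at hg
  have h0 : g 0 = 0 := congrFun hg 0
  have h1 : v * g 1 - g 0 = 0 := congrFun hg 1
  have h3 : -g 2 = 0 := congrFun hg 3
  intro i
  fin_cases i
  · exact h0
  · show g 1 = 0
    exact mem_nonZeroDivisors_iff_right.mp hv _ (by linear_combination h1 + h0)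
  · exact neg_eq_zero.mp h3

end RowMap

noncomputable def killT : GroupRingZ2 →+* GroupRingZ2 :=
  mapDomainRingHom ℤ ((AddMonoidHom.inl ℤ ℤ).comp (AddMonoidHom.fst ℤ ℤ))

lemma killT_single (p : ℤ × ℤ) (c : ℤ) : killT (single p c) = single (p.1, 0) c := by
  simp only [killT, mapDomainRingHom_apply, mapDomain_single, AddMonoidHom.coe_comp,
    Function.comp_apply, AddMonoidHom.coe_fst, AddMonoidHom.inl_apply]

lemma killT_sGen : killT sGen = sGen := killT_single _ _

lemma killT_tGen : killT tGen = 1 := killT_single _ _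

lemma mk_tGen : Ideal.Quotient.mk (Ideal.span {1 - tGen}) tGen = 1 := by
  rw [← map_one (Ideal.Quotient.mk _), Ideal.Quotient.eq, Ideal.mem_span_singleton]
  exact ⟨-1, by ring⟩

lemma mk_single_zero_fst (n : ℤ) :
    Ideal.Quotient.mk (Ideal.span {1 - tGen}) (single (0, n) 1) = 1 := by
  let ψ : Multiplicative ℤ →* GroupRingZ2 ⧸ Ideal.span {1 - tGen} :=
    (Ideal.Quotient.mk (Ideal.span {1 - tGen})).toMonoidHom.comp
      ((of ℤ (ℤ × ℤ)).comp (AddMonoidHom.inr ℤ ℤ).toMultiplicative)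
  have hψ : ψ = 1 := MonoidHom.ext_mint mk_tGen
  exact DFunLike.congr_fun hψ (Multiplicative.ofAdd n)

lemma mk_comp_killT :
    (Ideal.Quotient.mk (Ideal.span {1 - tGen})).comp killT = Ideal.Quotient.mk _ := by
  refine ringHom_ext (fun r => ?_) (fun m => ?_)
  · simp only [RingHom.coe_comp, Function.comp_apply, killT_single]
    rfl
  · have hm : single m 1 = (single (m.1, 0) 1 * single (0, m.2) 1 : GroupRingZ2) := by
      rw [single_mul_single, mul_one, Prod.mk_add_mk, add_zero, zero_add]
    rw [RingHom.comp_apply, killT_single, hm, map_mul, mk_single_zero_fst, mul_one]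

lemma one_sub_tGen_dvd_sub_killT (a : GroupRingZ2) : 1 - tGen ∣ a - killT a :=
  Ideal.mem_span_singleton.mp <|
    Ideal.Quotient.eq.mp (RingHom.congr_fun mk_comp_killT a).symm

lemma one_sub_sGen_ne_zero : (1 : GroupRingZ2) - sGen ≠ 0 := by
  rw [sub_ne_zero, one_def, sGen, Ne, single_left_inj one_ne_zero]
  simp [Prod.ext_iff]

lemma one_sub_tGen_ne_zero : (1 : GroupRingZ2) - tGen ≠ 0 := by
  rw [sub_ne_zero, one_def, tGen, Ne, single_left_inj one_ne_zero]
  simp [Prod.ext_iff]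

lemma one_sub_tGen_dvd_of_dvd_mul {a : GroupRingZ2} (h : 1 - tGen ∣ a * (1 - sGen)) :
    1 - tGen ∣ a := by
  obtain ⟨c, hc⟩ := h
  have hkill : killT a * (1 - sGen) = 0 := by
    simpa [killT_sGen, killT_tGen] using congrArg killT hc
  have ha : killT a = 0 := (mul_eq_zero.mp hkill).resolve_right one_sub_sGen_ne_zero
  simpa [ha] using one_sub_tGen_dvd_sub_killT a

lemma kerBasisF4_eq : kerBasisF4 = rowMapKerBasis (1 - sGen) (1 - tGen) := by
  funext i
  fin_cases i <;> simp [kerBasisF4, rowMapKerBasis, sub_eq_add_neg, ← neg_smul]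

/-- Let `R = ℤ[s,s⁻¹,t,t⁻¹]` and `d₁ : R⁴ → R` with `d₁(b₁) = d₁(b₂) = 1 − s` and
`d₁(b₃) = d₁(b₄) = 1 − t`.  Then `ker d₁` is the free `R`-module with basis
`b₁ − b₂`, `(1 − t)·b₂ + (s − 1)·b₃`, `b₃ − b₄`. -/
theorem ker_d1_type_F4 :
    LinearMap.ker (rowMap ![1 - sGen, 1 - sGen, 1 - tGen, 1 - tGen]) =
        Submodule.span GroupRingZ2 (Set.range kerBasisF4) ∧
      LinearIndependent GroupRingZ2 kerBasisF4 := by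
  have hv : 1 - tGen ∈ GroupRingZ2⁰ := mem_nonZeroDivisors_of_ne_zero one_sub_tGen_ne_zero
  rw [kerBasisF4_eq]
  exact ⟨ker_rowMap_eq_span hv fun _ => one_sub_tGen_dvd_of_dvd_mul,
    linearIndependent_rowMapKerBasis hv⟩
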